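/- arXiv:2509.10141 — 7 statements merged into one kernel-verified Lean document; each statement's English description precedes it below -/
import Mathlib

section
/- Let U, V be d×d unitary matrices with d ≥ 2, let |ψ⟩ be a unit vector, and set f_V = |⟨ψ|U†V|ψ⟩|². For any f_W ∈ [0,1] and any unitary W with |⟨ψ|U†W|ψ⟩|² = f_W, the absolute trace satisfies |Tr(V†W)| ≤ 2(√(f_V f_W) + √((1−f_V)(1−f_W))) + (d−2). -/
/-!
With `u = Uψ`, `x = Vψ`, `y = Wψ` the fidelities are `|⟪u, x⟫|²`, `|⟪u, y⟫|²` and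
`⟪ψ, V†W ψ⟫ = ⟪x, y⟫`; splitting `x` and `y` along `u` and its orthogonal complement bounds
`|⟪x, y⟫|` by `√(f_V f_W) + √((1 - f_V)(1 - f_W))`.

It remains to show `|Tr T| ≤ 2 |⟪ψ, T ψ⟫| + d - 2` for unitary `T`. Compute the trace in an
orthonormal basis containing `ψ` and the normalised component `g` of `T⁻¹ψ` orthogonal to `ψ`.
Then `⟪ψ, T g⟫ = √(1 - |⟪ψ, T ψ⟫|²)`, so the same splitting applied to the unit vector `T g`
gives `|⟪g, T g⟫| ≤ |⟪ψ, T ψ⟫|`, while the remaining `d - 2` diagonal entries have modulus at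
most `1`.
-/

open Module
open scoped InnerProductSpace

section InnerProductSpace

variable {𝕜 E : Type*} [RCLike 𝕜] [NormedAddCommGroup E] [InnerProductSpace 𝕜 E]

theorem norm_sub_inner_smul_sq {u : E} (hu : ‖u‖ = 1) (x : E) :
    ‖x - ⟪u, x⟫_𝕜 • u‖ ^ 2 = ‖x‖ ^ 2 - ‖⟪u, x⟫_𝕜‖ ^ 2 := by
  rw [@norm_sub_sq 𝕜, inner_smul_right, ← inner_conj_symm, RCLike.conj_mul, norm_smul, hu]
  norm_cast
  rw [RCLike.norm_conj]
  ring

theorem inner_sub_inner_smul_sub_inner_smul {u : E} (hu : ‖u‖ = 1) (x y : E) :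
    ⟪x - ⟪u, x⟫_𝕜 • u, y - ⟪u, y⟫_𝕜 • u⟫_𝕜 =
      ⟪x, y⟫_𝕜 - starRingEnd 𝕜 ⟪u, x⟫_𝕜 * ⟪u, y⟫_𝕜 := by
  have huu : ⟪u, u⟫_𝕜 = 1 := by rw [inner_self_eq_norm_sq_to_K, hu]; simp
  simp only [inner_sub_left, inner_sub_right, inner_smul_left, inner_smul_right, huu]
  rw [← inner_conj_symm x u]
  ring

theorem norm_inner_le_of_norm_eq_one {u x y : E} (hu : ‖u‖ = 1) (hx : ‖x‖ = 1) (hy : ‖y‖ = 1) :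
    ‖⟪x, y⟫_𝕜‖ ≤ ‖⟪u, x⟫_𝕜‖ * ‖⟪u, y⟫_𝕜‖ +
      √(1 - ‖⟪u, x⟫_𝕜‖ ^ 2) * √(1 - ‖⟪u, y⟫_𝕜‖ ^ 2) := by
  have hsqrt : ∀ z : E, ‖z‖ = 1 → √(1 - ‖⟪u, z⟫_𝕜‖ ^ 2) = ‖z - ⟪u, z⟫_𝕜 • u‖ := fun z hz => by
    rw [← Real.sqrt_sq (norm_nonneg (z - _)), norm_sub_inner_smul_sq hu, hz, one_pow]
  have hdecomp : ⟪x, y⟫_𝕜 = starRingEnd 𝕜 ⟪u, x⟫_𝕜 * ⟪u, y⟫_𝕜 +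
      ⟪x - ⟪u, x⟫_𝕜 • u, y - ⟪u, y⟫_𝕜 • u⟫_𝕜 := by
    rw [inner_sub_inner_smul_sub_inner_smul hu]; ring
  rw [hsqrt x hx, hsqrt y hy, hdecomp]
  refine (norm_add_le _ _).trans (add_le_add ?_ (norm_inner_le_norm _ _))
  rw [norm_mul, RCLike.norm_conj]

theorem orthonormal_pair {x y : E} (hx : ‖x‖ = 1) (hy : ‖y‖ = 1) (hxy : ⟪x, y⟫_𝕜 = 0) :
    Orthonormal 𝕜 ((↑) : ({x, y} : Set E) → E) := by
  have hyx : ⟪y, x⟫_𝕜 = 0 := by rw [← inner_conj_symm, hxy, map_zero]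
  have hne : x ≠ y := by rintro rfl; simp [hx] at hxy
  classical
  rw [orthonormal_iff_ite]
  rintro ⟨a, rfl | rfl⟩ ⟨b, hb⟩ <;> obtain rfl | rfl := hb <;>
    simp_all [Subtype.ext_iff, hne.symm]

end InnerProductSpace

namespace LinearIsometryEquiv

variable {𝕜 E : Type*} [RCLike 𝕜] [NormedAddCommGroup E] [InnerProductSpace 𝕜 E]
  (T : E ≃ₗᵢ[𝕜] E)

theorem norm_inner_apply_le_one {x : E} (hx : ‖x‖ = 1) :
    ‖⟪x, T x⟫_𝕜‖ ≤ 1 := by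
  simpa [hx] using norm_inner_le_norm (𝕜 := 𝕜) x (T x)

theorem exists_orthogonal_norm_inner_apply_le {x : E} (hx : ‖x‖ = 1)
    (hlt : ‖⟪x, T x⟫_𝕜‖ < 1) :
    ∃ y : E, ‖y‖ = 1 ∧ ⟪x, y⟫_𝕜 = 0 ∧ ‖⟪y, T y⟫_𝕜‖ ≤ ‖⟪x, T x⟫_𝕜‖ := by
  set m := ⟪x, T x⟫_𝕜
  have hxx : ⟪x, x⟫_𝕜 = 1 := by rw [inner_self_eq_norm_sq_to_K, hx]; simp
  have hxa : ⟪x, T.symm x⟫_𝕜 = starRingEnd 𝕜 m := by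
    rw [← T.inner_map_eq_flip, inner_conj_symm]
  set c := T.symm x - ⟪x, T.symm x⟫_𝕜 • x
  have hc : ‖c‖ ^ 2 = 1 - ‖m‖ ^ 2 := by
    rw [norm_sub_inner_smul_sq hx, T.symm.norm_map, hx, hxa, RCLike.norm_conj, one_pow]
  have hc0 : c ≠ 0 := by
    intro h
    rw [h, norm_zero] at hc
    nlinarith [norm_nonneg m]
  have hxc : ⟪x, c⟫_𝕜 = 0 := by
    rw [inner_sub_right, inner_smul_right, hxx, mul_one, sub_self]
  have hxTc : ⟪x, T c⟫_𝕜 = (‖c‖ : 𝕜) ^ 2 := by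
    rw [map_sub, map_smul, T.apply_symm_apply, inner_sub_right, inner_smul_right, hxx, hxa,
      RCLike.conj_mul]
    exact_mod_cast hc.symm
  set y := (‖c‖⁻¹ : 𝕜) • c
  have hy : ‖y‖ = 1 := norm_smul_inv_norm hc0
  have hxy : ⟪x, y⟫_𝕜 = 0 := by rw [inner_smul_right, hxc, mul_zero]
  have hxTy : ‖⟪x, T y⟫_𝕜‖ = ‖c‖ := by
    rw [map_smul, inner_smul_right, hxTc, norm_mul, norm_inv, norm_pow, RCLike.norm_ofReal,
      abs_norm]
    field_simp
  refine ⟨y, hy, hxy, ?_⟩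
  calc ‖⟪y, T y⟫_𝕜‖
      ≤ ‖⟪x, y⟫_𝕜‖ * ‖⟪x, T y⟫_𝕜‖ + √(1 - ‖⟪x, y⟫_𝕜‖ ^ 2) * √(1 - ‖⟪x, T y⟫_𝕜‖ ^ 2) :=
        norm_inner_le_of_norm_eq_one hx hy ((T.norm_map y).trans hy)
    _ = ‖m‖ := by simp [hxy, hxTy, hc]

variable [FiniteDimensional 𝕜 E]

theorem norm_trace_le_finrank :
    ‖LinearMap.trace 𝕜 E (T : E →ₗ[𝕜] E)‖ ≤ finrank 𝕜 E := by
  let b := stdOrthonormalBasis 𝕜 E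
  rw [LinearMap.trace_eq_sum_inner _ b]
  calc ‖∑ i, ⟪b i, T (b i)⟫_𝕜‖ ≤ ∑ i, ‖⟪b i, T (b i)⟫_𝕜‖ := norm_sum_le _ _
    _ ≤ ∑ _i, (1 : ℝ) :=
        Finset.sum_le_sum fun i _ => norm_inner_apply_le_one T (b.orthonormal.1 i)
    _ = finrank 𝕜 E := by simp

theorem norm_trace_le_of_orthonormal_pair {x y : E}
    (hx : ‖x‖ = 1) (hy : ‖y‖ = 1) (hxy : ⟪x, y⟫_𝕜 = 0) :
    ‖LinearMap.trace 𝕜 E (T : E →ₗ[𝕜] E)‖ ≤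
      ‖⟪x, T x⟫_𝕜‖ + ‖⟪y, T y⟫_𝕜‖ + (finrank 𝕜 E - 2 : ℝ) := by
  classical
  obtain ⟨s, b, hxys, hb⟩ := (orthonormal_pair hx hy hxy).exists_orthonormalBasis_extension
  have hne : x ≠ y := by rintro rfl; simp [hx] at hxy
  have hxs : x ∈ s := hxys (by simp)
  have hys : y ∈ s.erase x := Finset.mem_erase.2 ⟨hne.symm, hxys (by simp)⟩
  have hcard : s.card = finrank 𝕜 E := by
    simpa using (finrank_eq_card_basis b.toBasis).symm
  let f : E → ℝ := fun z => ‖⟪z, T z⟫_𝕜‖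
  have hrest : ∑ z ∈ (s.erase x).erase y, f z ≤ finrank 𝕜 E - 2 := by
    calc ∑ z ∈ (s.erase x).erase y, f z ≤ ∑ _z ∈ (s.erase x).erase y, (1 : ℝ) := by
          refine Finset.sum_le_sum fun z hz => norm_inner_apply_le_one T ?_
          have hzs : z ∈ s := Finset.mem_of_mem_erase (Finset.mem_of_mem_erase hz)
          simpa [hb] using b.orthonormal.1 ⟨z, hzs⟩
      _ = finrank 𝕜 E - 2 := by
          rw [Finset.sum_const, Finset.card_erase_of_mem hys, Finset.card_erase_of_mem hxs, hcard]
          have : 2 ≤ s.card := Finset.one_lt_card.2 ⟨x, hxs, y, Finset.mem_of_mem_erase hys, hne⟩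
          rw [nsmul_one, Nat.sub_sub, Nat.cast_sub (by omega)]
          norm_num
  rw [LinearMap.trace_eq_sum_inner _ b, hb]
  calc ‖∑ z : s, ⟪(z : E), T z⟫_𝕜‖ ≤ ∑ z : s, f z := norm_sum_le _ _
    _ = ∑ z ∈ s, f z := Finset.sum_coe_sort s f
    _ = f x + (f y + ∑ z ∈ (s.erase x).erase y, f z) := by
        rw [← Finset.add_sum_erase _ _ hxs, ← Finset.add_sum_erase _ _ hys]
    _ ≤ _ := by linarith

theorem norm_trace_le_two_mul_norm_inner_add {x : E} (hx : ‖x‖ = 1) :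
    ‖LinearMap.trace 𝕜 E (T : E →ₗ[𝕜] E)‖ ≤ 2 * ‖⟪x, T x⟫_𝕜‖ + (finrank 𝕜 E - 2 : ℝ) := by
  rcases (norm_inner_apply_le_one T hx).eq_or_lt with h | h
  · rw [h]
    linarith [norm_trace_le_finrank T]
  · obtain ⟨y, hy, hxy, hyT⟩ := exists_orthogonal_norm_inner_apply_le T hx h
    linarith [norm_trace_le_of_orthonormal_pair T hx hy hxy]

end LinearIsometryEquiv

namespace Matrix

variable {𝕜 n : Type*} [RCLike 𝕜] [Fintype n]

theorem dotProduct_conjTranspose_mul_mulVec (P Q : Matrix n n 𝕜) (ψ : n → 𝕜) :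
    star ψ ⬝ᵥ (Pᴴ * Q) *ᵥ ψ = star (P *ᵥ ψ) ⬝ᵥ Q *ᵥ ψ := by
  rw [← mulVec_mulVec, star_mulVec, dotProduct_mulVec]

theorem inner_toLp_toLp_eq_dotProduct (x y : n → 𝕜) :
    ⟪WithLp.toLp 2 x, WithLp.toLp 2 y⟫_𝕜 = star x ⬝ᵥ y :=
  (EuclideanSpace.inner_toLp_toLp x y).trans (dotProduct_comm _ _)

theorem norm_toLp_mulVec_eq_one [DecidableEq n] {A : Matrix n n 𝕜} (hA : A ∈ unitaryGroup n 𝕜)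
    {ψ : n → 𝕜} (hψ : star ψ ⬝ᵥ ψ = 1) : ‖WithLp.toLp 2 (A *ᵥ ψ)‖ = 1 := by
  have h : ⟪WithLp.toLp 2 (A *ᵥ ψ), WithLp.toLp 2 (A *ᵥ ψ)⟫_𝕜 = 1 := by
    rw [inner_toLp_toLp_eq_dotProduct, ← dotProduct_conjTranspose_mul_mulVec,
      ← star_eq_conjTranspose, Unitary.star_mul_self_of_mem hA, one_mulVec, hψ]
  rw [inner_self_eq_norm_sq_to_K] at h
  exact (pow_eq_one_iff_of_nonneg (norm_nonneg _) two_ne_zero).1 (by exact_mod_cast h)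

theorem norm_trace_le_two_mul_norm_dotProduct_mulVec_add [DecidableEq n] {A : Matrix n n 𝕜}
    (hA : A ∈ unitaryGroup n 𝕜) {ψ : n → 𝕜} (hψ : star ψ ⬝ᵥ ψ = 1) :
    ‖A.trace‖ ≤ 2 * ‖star ψ ⬝ᵥ A *ᵥ ψ‖ + (Fintype.card n - 2 : ℝ) := by
  let T := Unitary.linearIsometryEquiv ⟨toEuclideanCLM (n := n) (𝕜 := 𝕜) A, Unitary.map_mem _ hA⟩
  have htrace : LinearMap.trace 𝕜 _ (T : EuclideanSpace 𝕜 n →ₗ[𝕜] _) = A.trace :=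
    (LinearMap.trace_conj' _ _).trans (trace_toLin'_eq A)
  have hinner : ⟪WithLp.toLp 2 ψ, T (WithLp.toLp 2 ψ)⟫_𝕜 = star ψ ⬝ᵥ A *ᵥ ψ :=
    inner_toLp_toLp_eq_dotProduct _ _
  have hψ' : ‖WithLp.toLp 2 ψ‖ = 1 := by
    simpa using norm_toLp_mulVec_eq_one (one_mem _) hψ
  simpa [htrace, hinner, finrank_euclideanSpace] using T.norm_trace_le_two_mul_norm_inner_add hψ'

end Matrix

open Matrix Complex

theorem abs_trace_upper_bound_separable_general {d : ℕ}
    (U V W : Matrix (Fin d) (Fin d) ℂ)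
    (hU : U ∈ Matrix.unitaryGroup (Fin d) ℂ)
    (hV : V ∈ Matrix.unitaryGroup (Fin d) ℂ)
    (hW : W ∈ Matrix.unitaryGroup (Fin d) ℂ)
    (ψ : Fin d → ℂ) (hψ : star ψ ⬝ᵥ ψ = 1)
    (fV fW : ℝ)
    (hfV : fV = ‖star ψ ⬝ᵥ (Uᴴ * V).mulVec ψ‖ ^ 2)
    (hfW : ‖star ψ ⬝ᵥ (Uᴴ * W).mulVec ψ‖ ^ 2 = fW) :
    ‖Matrix.trace (Vᴴ * W)‖ ≤
      2 * (Real.sqrt (fV * fW) + Real.sqrt ((1 - fV) * (1 - fW))) + ((d : ℝ) - 2) := by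
  have hinner (P Q : Matrix (Fin d) (Fin d) ℂ) :
      star ψ ⬝ᵥ (Pᴴ * Q) *ᵥ ψ = ⟪WithLp.toLp 2 (P *ᵥ ψ), WithLp.toLp 2 (Q *ᵥ ψ)⟫_ℂ := by
    rw [dotProduct_conjTranspose_mul_mulVec, inner_toLp_toLp_eq_dotProduct]
  have hunit {A : Matrix (Fin d) (Fin d) ℂ} (hA : A ∈ unitaryGroup (Fin d) ℂ) :
      ‖WithLp.toLp 2 (A *ᵥ ψ)‖ = 1 :=
    norm_toLp_mulVec_eq_one hA hψ
  have htrace := norm_trace_le_two_mul_norm_dotProduct_mulVec_add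
    (mul_mem (Unitary.star_mem hV) hW : Vᴴ * W ∈ unitaryGroup (Fin d) ℂ) hψ
  have hbound := norm_inner_le_of_norm_eq_one (𝕜 := ℂ) (hunit hU) (hunit hV) (hunit hW)
  have hfV1 : fV ≤ 1 := by
    rw [hfV, hinner]
    refine pow_le_one₀ (norm_nonneg _) ((norm_inner_le_norm _ _).trans ?_)
    rw [hunit hU, hunit hV, one_mul]
  rw [← hinner, ← hinner, ← hinner] at hbound
  rw [Fintype.card_fin] at htrace
  subst hfV hfW
  rw [Real.sqrt_mul (sub_nonneg.2 hfV1), ← mul_pow, Real.sqrt_sq (by positivity)]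
  linarith

theorem abs_trace_upper_bound_separable {d : ℕ} (hd : 2 ≤ d)
    (U V W : Matrix (Fin d) (Fin d) ℂ)
    (hU : U ∈ Matrix.unitaryGroup (Fin d) ℂ)
    (hV : V ∈ Matrix.unitaryGroup (Fin d) ℂ)
    (hW : W ∈ Matrix.unitaryGroup (Fin d) ℂ)
    (ψ : Fin d → ℂ) (hψ : star ψ ⬝ᵥ ψ = 1)
    (fV fW : ℝ)
    (hfV : fV = ‖star ψ ⬝ᵥ (Uᴴ * V).mulVec ψ‖ ^ 2)
    (hfW0 : 0 ≤ fW) (hfW1 : fW ≤ 1)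
    (hfW : ‖star ψ ⬝ᵥ (Uᴴ * W).mulVec ψ‖ ^ 2 = fW) :
    ‖Matrix.trace (Vᴴ * W)‖ ≤
      2 * (Real.sqrt (fV * fW) + Real.sqrt ((1 - fV) * (1 - fW))) + ((d : ℝ) - 2) :=
  abs_trace_upper_bound_separable_general U V W hU hV hW ψ hψ fV fW hfV hfW
end

section
/- Let U, V be d×d unitary matrices (d ≥ 2), |ψ⟩ a unit vector, and f_V = |⟨ψ|U†V|ψ⟩|². For every f_W ∈ [0,1] there exists a unitary W with |⟨ψ|U†W|ψ⟩|² = f_W and |Tr(V†W)| = 2(√(f_V f_W) + √((1−f_V)(1−f_W))) + (d−2). -/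
/-!
With `u = V†Uψ` we have `⟨ψ|U†(VT)|ψ⟩ = ⟨u|Tψ⟩` and `Tr(V†(VT)) = Tr T`, so it suffices to find a
unitary `T` with `|⟨u|Tψ⟩|² = f_W` and the prescribed trace. Write `u = zψ + rc` with `c` a unit
vector orthogonal to `ψ`, so that `|z|² = f_V` and `r² = 1 - f_V`. Take for `T` the rotation of
the plane spanned by `ψ` and `c` that fixes its orthogonal complement and sends `ψ` to `Cψ + sc`:
its trace is `d - 2 + 2C`. With `|z| = cos α`, `√f_W = cos β` and `r = sin α`, `√(1 - f_W) = sin β`,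
writing `z = |z| e^{iθ}` and choosing `C = cos (α - β)`, `s = e^{-iθ} sin (α - β)` gives
`⟨u|Tψ⟩ = e^{-iθ} cos β`.
-/

open Matrix Complex
open Module

section InnerProductSpace

variable {𝕜 E : Type*} [RCLike 𝕜] [NormedAddCommGroup E] [InnerProductSpace 𝕜 E]
  [FiniteDimensional 𝕜 E]

theorem exists_norm_eq_one_inner_eq_zero (hE : 2 ≤ finrank 𝕜 E) (ψ : E) :
    ∃ c : E, ‖c‖ = 1 ∧ inner 𝕜 ψ c = 0 := by
  have hspan : finrank 𝕜 (𝕜 ∙ ψ) ≤ 1 := by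
    simpa using finrank_span_le_card (R := 𝕜) ({ψ} : Set E)
  have hperp : (𝕜 ∙ ψ)ᗮ ≠ ⊥ := by
    intro h
    have := (𝕜 ∙ ψ).finrank_add_finrank_orthogonal
    rw [h, finrank_bot] at this
    omega
  obtain ⟨v, hv, hv0⟩ := Submodule.exists_mem_ne_zero_of_ne_bot hperp
  exact ⟨(‖v‖⁻¹ : 𝕜) • v, norm_smul_inv_norm hv0,
    by rw [inner_smul_right, Submodule.mem_orthogonal_singleton_iff_inner_right.mp hv, mul_zero]⟩

theorem exists_eq_inner_smul_add_smul_of_norm_eq_one (hE : 2 ≤ finrank 𝕜 E) {ψ : E}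
    (hψ : ‖ψ‖ = 1) (u : E) :
    ∃ c : E, ‖c‖ = 1 ∧ inner 𝕜 ψ c = 0 ∧
      u = inner 𝕜 ψ u • ψ + (‖u - inner 𝕜 ψ u • ψ‖ : 𝕜) • c := by
  set v := u - inner 𝕜 ψ u • ψ
  have hv : inner 𝕜 ψ v = 0 := by
    simp [v, inner_sub_right, inner_smul_right, inner_self_eq_norm_sq_to_K, hψ]
  by_cases hv0 : v = 0
  · obtain ⟨c, hc, hψc⟩ := exists_norm_eq_one_inner_eq_zero hE ψ
    refine ⟨c, hc, hψc, ?_⟩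
    rw [hv0, norm_zero, RCLike.ofReal_zero, zero_smul, add_zero, ← sub_eq_zero]
    exact hv0
  · refine ⟨(‖v‖⁻¹ : 𝕜) • v, norm_smul_inv_norm hv0, by rw [inner_smul_right, hv, mul_zero], ?_⟩
    rw [smul_smul, mul_inv_cancel₀ (by simpa using hv0), one_smul, add_sub_cancel]

theorem exists_orthonormal_decomposition (hE : 2 ≤ finrank 𝕜 E) {ψ : E} (hψ : ‖ψ‖ = 1) (u : E) :
    ∃ (c : E) (r : ℝ), 0 ≤ r ∧ ‖c‖ = 1 ∧ inner 𝕜 ψ c = 0 ∧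
      ‖inner 𝕜 ψ u‖ ^ 2 + r ^ 2 = ‖u‖ ^ 2 ∧ u = inner 𝕜 ψ u • ψ + (r : 𝕜) • c := by
  obtain ⟨c, hc, hψc, hu⟩ := exists_eq_inner_smul_add_smul_of_norm_eq_one hE hψ u
  set r := ‖u - inner 𝕜 ψ u • ψ‖
  refine ⟨c, r, norm_nonneg _, hc, hψc, ?_, hu⟩
  have horth : inner 𝕜 (inner 𝕜 ψ u • ψ) ((r : 𝕜) • c) = 0 := by
    rw [inner_smul_left, inner_smul_right, hψc, mul_zero, mul_zero]
  have hpyth := norm_add_sq_eq_norm_sq_add_norm_sq_of_inner_eq_zero _ _ horth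
  rw [← hu, norm_smul, norm_smul, hψ, hc, RCLike.norm_ofReal, abs_of_nonneg (norm_nonneg _)]
    at hpyth
  linear_combination -hpyth

end InnerProductSpace

theorem RCLike.exists_norm_eq_one_eq_norm_mul {𝕜 : Type*} [RCLike 𝕜] (z : 𝕜) :
    ∃ p : 𝕜, ‖p‖ = 1 ∧ z = ‖z‖ * p := by
  by_cases hz : z = 0
  · exact ⟨1, norm_one, by simp [hz]⟩
  · have hz' : (‖z‖ : 𝕜) ≠ 0 := by simpa using hz
    exact ⟨z / ‖z‖, by simp [norm_div, hz], (mul_div_cancel₀ z hz').symm⟩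

section Matrix

variable {𝕜 n : Type*} [RCLike 𝕜] [Fintype n]

theorem star_dotProduct_eq_inner (x y : n → 𝕜) :
    star x ⬝ᵥ y = inner 𝕜 (WithLp.toLp 2 x) (WithLp.toLp 2 y) := by
  rw [EuclideanSpace.inner_toLp_toLp, dotProduct_comm]

theorem star_dotProduct_self_eq_one_iff (x : n → 𝕜) :
    star x ⬝ᵥ x = 1 ↔ ‖WithLp.toLp 2 x‖ = 1 := by
  rw [star_dotProduct_eq_inner, inner_self_eq_norm_sq_to_K]
  norm_cast
  exact pow_eq_one_iff_of_nonneg (norm_nonneg _) two_ne_zero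

theorem star_dotProduct_eq_zero_comm {x y : n → 𝕜} (h : star x ⬝ᵥ y = 0) :
    star y ⬝ᵥ x = 0 := by
  rw [star_dotProduct, h, star_zero]

theorem Matrix.exists_orthonormal_decomposition (hn : 2 ≤ Fintype.card n) {ψ u : n → 𝕜}
    (hψ : star ψ ⬝ᵥ ψ = 1) (hu : star u ⬝ᵥ u = 1) :
    ∃ (c : n → 𝕜) (r : ℝ), 0 ≤ r ∧ star c ⬝ᵥ c = 1 ∧ star ψ ⬝ᵥ c = 0 ∧
      ‖star ψ ⬝ᵥ u‖ ^ 2 + r ^ 2 = 1 ∧ u = (star ψ ⬝ᵥ u) • ψ + (r : 𝕜) • c := by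
  rw [star_dotProduct_self_eq_one_iff] at hψ hu
  obtain ⟨c, r, hr, hc, hψc, hpyth, hdec⟩ := _root_.exists_orthonormal_decomposition
    (by rwa [finrank_euclideanSpace]) hψ (WithLp.toLp 2 u)
  refine ⟨c.ofLp, r, hr, ?_, ?_, ?_, ?_⟩
  · rwa [star_dotProduct_self_eq_one_iff]
  · rwa [star_dotProduct_eq_inner]
  · rw [star_dotProduct_eq_inner, hpyth, hu, one_pow]
  · rw [star_dotProduct_eq_inner]
    exact congrArg WithLp.ofLp hdec

variable [DecidableEq n]

theorem star_mulVec_dotProduct_mulVec {M : Matrix n n 𝕜} (hM : M ∈ unitaryGroup n 𝕜)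
    (x y : n → 𝕜) : star (M *ᵥ x) ⬝ᵥ M *ᵥ y = star x ⬝ᵥ y := by
  rw [star_mulVec, ← dotProduct_mulVec, mulVec_mulVec, ← star_eq_conjTranspose,
    mem_unitaryGroup_iff'.mp hM, one_mulVec]

/-- For orthonormal `ψ, c`, the matrix acting as `!![C, -star s; s, C]` on the basis `(ψ, c)` of
their span and as the identity on its orthogonal complement. -/
noncomputable def planeRotation (C : ℝ) (s : 𝕜) (ψ c : n → 𝕜) : Matrix n n 𝕜 :=
  1 + ((C : 𝕜) - 1) • (vecMulVec ψ (star ψ) + vecMulVec c (star c))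
    + s • vecMulVec c (star ψ) - star s • vecMulVec ψ (star c)

variable {ψ c : n → 𝕜}

theorem planeRotation_mulVec (hψ : star ψ ⬝ᵥ ψ = 1) (hψc : star ψ ⬝ᵥ c = 0) (C : ℝ) (s : 𝕜) :
    planeRotation C s ψ c *ᵥ ψ = (C : 𝕜) • ψ + s • c := by
  simp only [planeRotation, add_mulVec, sub_mulVec, smul_mulVec, one_mulVec, vecMulVec_mulVec,
    hψ, star_dotProduct_eq_zero_comm hψc, MulOpposite.op_one, MulOpposite.op_zero, one_smul,
    zero_smul, smul_zero]
  module

theorem trace_planeRotation (hψ : star ψ ⬝ᵥ ψ = 1) (hc : star c ⬝ᵥ c = 1)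
    (hψc : star ψ ⬝ᵥ c = 0) (C : ℝ) (s : 𝕜) :
    trace (planeRotation C s ψ c) = Fintype.card n + 2 * ((C : 𝕜) - 1) := by
  simp only [planeRotation, trace_add, trace_sub, trace_smul, trace_one, trace_vecMulVec,
    dotProduct_comm _ (star _), hψ, hc, hψc, star_dotProduct_eq_zero_comm hψc, smul_eq_mul,
    mul_zero, sub_zero, add_zero]
  ring

theorem planeRotation_mem_unitaryGroup (hψ : star ψ ⬝ᵥ ψ = 1) (hc : star c ⬝ᵥ c = 1)
    (hψc : star ψ ⬝ᵥ c = 0) {C : ℝ} {s : 𝕜} (hCs : C ^ 2 + ‖s‖ ^ 2 = 1) :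
    planeRotation C s ψ c ∈ unitaryGroup n 𝕜 := by
  have hs : s * starRingEnd 𝕜 s = 1 - (C : 𝕜) ^ 2 := by
    rw [RCLike.mul_conj, eq_sub_iff_add_eq, add_comm]
    exact_mod_cast hCs
  have hs' : starRingEnd 𝕜 s * s = 1 - (C : 𝕜) ^ 2 := by rw [mul_comm, hs]
  rw [mem_unitaryGroup_iff', star_eq_conjTranspose, planeRotation]
  simp only [conjTranspose_add, conjTranspose_sub, conjTranspose_smul, conjTranspose_one,
    conjTranspose_vecMulVec, star_star, star_sub, star_one, RCLike.star_def, RCLike.conj_ofReal,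
    RCLike.conj_conj]
  simp only [add_mul, mul_add, sub_mul, mul_sub, Matrix.smul_mul, Matrix.mul_smul, one_mul,
    mul_one, vecMulVec_mul_vecMulVec, hψ, hc, hψc, star_dotProduct_eq_zero_comm hψc, one_smul,
    zero_smul, vecMulVec_zero, smul_zero, smul_smul]
  rw [hs, hs']
  module

theorem exists_unitary_overlap_trace_of_orthonormal (hψ : star ψ ⬝ᵥ ψ = 1)
    (hc : star c ⬝ᵥ c = 1) (hψc : star ψ ⬝ᵥ c = 0) {z : 𝕜} {r : ℝ} (hzr : ‖z‖ ^ 2 + r ^ 2 = 1)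
    {f : ℝ} (hf0 : 0 ≤ f) (hf1 : f ≤ 1) :
    ∃ T ∈ unitaryGroup n 𝕜, ‖star (z • ψ + (r : 𝕜) • c) ⬝ᵥ T *ᵥ ψ‖ ^ 2 = f ∧
      trace T = (((Fintype.card n : ℝ) - 2 + 2 * (‖z‖ * √f + r * √(1 - f)) : ℝ) : 𝕜) := by
  obtain ⟨p, hp, hzp⟩ := RCLike.exists_norm_eq_one_eq_norm_mul z
  set a := ‖z‖
  set b := √f
  set b' := √(1 - f)
  have hb : b ^ 2 = f := Real.sq_sqrt hf0
  have hb' : b' ^ 2 = 1 - f := Real.sq_sqrt (by linarith)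
  set C := a * b + r * b'
  set S := r * b - a * b'
  set s := (S : 𝕜) * starRingEnd 𝕜 p
  have hCs : C ^ 2 + ‖s‖ ^ 2 = 1 := by
    rw [norm_mul, RCLike.norm_conj, hp, mul_one, RCLike.norm_ofReal, sq_abs]
    linear_combination (b ^ 2 + b' ^ 2) * hzr + hb + hb'
  have hoverlap : star (z • ψ + (r : 𝕜) • c) ⬝ᵥ planeRotation C s ψ c *ᵥ ψ
      = starRingEnd 𝕜 p * b := by
    have hzr' : (a : 𝕜) ^ 2 + (r : 𝕜) ^ 2 = 1 := by exact_mod_cast hzr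
    rw [planeRotation_mulVec hψ hψc, hzp]
    simp only [star_add, star_smul, add_dotProduct, dotProduct_add, smul_dotProduct,
      dotProduct_smul, hψ, hc, hψc, star_dotProduct_eq_zero_comm hψc, smul_eq_mul,
      RCLike.star_def, map_mul, RCLike.conj_ofReal, s, C, S]
    push_cast
    linear_combination (starRingEnd 𝕜 p * b) * hzr'
  refine ⟨planeRotation C s ψ c, planeRotation_mem_unitaryGroup hψ hc hψc hCs, ?_, ?_⟩
  · rw [hoverlap, norm_mul, RCLike.norm_conj, hp, one_mul, RCLike.norm_ofReal,
      abs_of_nonneg (Real.sqrt_nonneg _), hb]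
  · rw [trace_planeRotation hψ hc hψc]
    push_cast
    ring

theorem exists_unitary_overlap_trace (hn : 2 ≤ Fintype.card n) {u : n → 𝕜}
    (hψ : star ψ ⬝ᵥ ψ = 1) (hu : star u ⬝ᵥ u = 1) {f : ℝ} (hf0 : 0 ≤ f) (hf1 : f ≤ 1) :
    ∃ T ∈ unitaryGroup n 𝕜, ‖star u ⬝ᵥ T *ᵥ ψ‖ ^ 2 = f ∧
      ‖trace T‖ = 2 * (√(‖star u ⬝ᵥ ψ‖ ^ 2 * f) + √((1 - ‖star u ⬝ᵥ ψ‖ ^ 2) * (1 - f)))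
        + ((Fintype.card n : ℝ) - 2) := by
  obtain ⟨c, r, hr, hc, hψc, hzr, hdec⟩ := Matrix.exists_orthonormal_decomposition hn hψ hu
  obtain ⟨T, hT, hoverlap, htrace⟩ :=
    exists_unitary_overlap_trace_of_orthonormal hψ hc hψc hzr hf0 hf1
  rw [← hdec] at hoverlap
  refine ⟨T, hT, hoverlap, ?_⟩
  have hn' : (2 : ℝ) ≤ Fintype.card n := by exact_mod_cast hn
  have hnorm : ‖star u ⬝ᵥ ψ‖ = ‖star ψ ⬝ᵥ u‖ := by rw [star_dotProduct, norm_star]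
  have hr2 : 1 - ‖star ψ ⬝ᵥ u‖ ^ 2 = r ^ 2 := by linarith
  rw [htrace, RCLike.norm_ofReal, abs_of_nonneg (by positivity), hnorm, hr2,
    Real.sqrt_mul (sq_nonneg _), Real.sqrt_mul (sq_nonneg _), Real.sqrt_sq (norm_nonneg _),
    Real.sqrt_sq hr]
  ring

end Matrix

theorem exists_unitary_attaining_trace_bound {d : ℕ} (hd : 2 ≤ d)
    (U V : Matrix (Fin d) (Fin d) ℂ)
    (hU : U ∈ Matrix.unitaryGroup (Fin d) ℂ)
    (hV : V ∈ Matrix.unitaryGroup (Fin d) ℂ)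
    (ψ : Fin d → ℂ) (hψ : star ψ ⬝ᵥ ψ = 1)
    (fV : ℝ) (hfV : fV = ‖star ψ ⬝ᵥ (Uᴴ * V).mulVec ψ‖ ^ 2)
    (fW : ℝ) (hfW0 : 0 ≤ fW) (hfW1 : fW ≤ 1) :
    ∃ W : Matrix (Fin d) (Fin d) ℂ,
      W ∈ Matrix.unitaryGroup (Fin d) ℂ ∧
      ‖star ψ ⬝ᵥ (Uᴴ * W).mulVec ψ‖ ^ 2 = fW ∧
      ‖Matrix.trace (Vᴴ * W)‖ =
        2 * (Real.sqrt (fV * fW) + Real.sqrt ((1 - fV) * (1 - fW))) + ((d : ℝ) - 2) := by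
  have hVU : Vᴴ * U ∈ unitaryGroup (Fin d) ℂ := mul_mem (Unitary.star_mem hV) hU
  set u := (Vᴴ * U) *ᵥ ψ
  have hu : star u ⬝ᵥ u = 1 := by rw [star_mulVec_dotProduct_mulVec hVU, hψ]
  have hoverlap (M : Matrix (Fin d) (Fin d) ℂ) :
      star ψ ⬝ᵥ (Uᴴ * V * M) *ᵥ ψ = star u ⬝ᵥ M *ᵥ ψ := by
    rw [← mulVec_mulVec, dotProduct_mulVec, star_mulVec, conjTranspose_mul,
      conjTranspose_conjTranspose]
  obtain ⟨T, hT, hTψ, htrace⟩ :=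
    exists_unitary_overlap_trace (by simpa using hd) hψ hu hfW0 hfW1
  refine ⟨V * T, mul_mem hV hT, by rwa [← Matrix.mul_assoc, hoverlap], ?_⟩
  rw [← Matrix.mul_assoc, ← star_eq_conjTranspose, mem_unitaryGroup_iff'.mp hV, one_mul, htrace,
    hfV, ← Matrix.mul_one (Uᴴ * V), hoverlap, one_mulVec, Fintype.card_fin]
end

section
/- Let U, V be d×d unitary matrices and set f_V = |Tr(U†V)|²/d², f_W ∈ [0,1]. Then for every unitary W with |Tr(U†W)|²/d² = f_W, the absolute trace satisfies |Tr(V†W)| ≤ d√(f_V f_W) + d√((1−f_V)(1−f_W)). Consequently the phase-corrected Frobenius distance satisfies min_ρ ‖V − e^{iρ}W‖_F ≥ √(2d(1 − √(f_V f_W) − √((1−f_V)(1−f_W)))). -/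
open Matrix Complex

noncomputable def frobNorm {d : ℕ} (X : Matrix (Fin d) (Fin d) ℂ) : ℝ :=
  Real.sqrt ((Matrix.trace (Xᴴ * X)).re)

/-!
Flattening a matrix into a vector of `EuclideanSpace` turns `Tr (Xᴴ * Y)` into the inner product,
the Frobenius norm into the norm, and a `d × d` unitary into a vector of squared norm `d`.
Splitting `v` and `w` along `u` and its orthogonal complement, `⟪v, w⟫` is the sum of the inner
product of the components along `u`, of modulus `‖⟪u, v⟫‖ ‖⟪u, w⟫‖ / ‖u‖²`, and that of the
orthogonal components, whose norms Pythagoras gives. The distance bound then follows from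
`‖v - c • w‖² = ‖v‖² + ‖w‖² - 2 Re (c ⟪v, w⟫)` with `‖c‖ = 1`.
-/

open scoped InnerProductSpace

theorem Real.sqrt_mul_mul_sqrt_mul_le {r : ℝ} (hr : 0 ≤ r) (x y : ℝ) :
    √(r * x) * √(r * y) ≤ r * √(x * y) := by
  rcases le_or_gt 0 x with hx | hx
  · rw [← Real.sqrt_mul (mul_nonneg hr hx), show r * x * (r * y) = r ^ 2 * (x * y) by ring,
      Real.sqrt_mul (sq_nonneg r), Real.sqrt_sq hr]
  · rw [Real.sqrt_eq_zero'.mpr (mul_nonpos_of_nonneg_of_nonpos hr hx.le), zero_mul]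
    positivity

section InnerProductSpace

variable {𝕜 E : Type*} [RCLike 𝕜] [NormedAddCommGroup E] [InnerProductSpace 𝕜 E]

theorem Submodule.norm_inner_le_starProjection_add_orthogonal (K : Submodule 𝕜 E)
    [K.HasOrthogonalProjection] (v w : E) :
    ‖⟪v, w⟫_𝕜‖ ≤ ‖K.starProjection v‖ * ‖K.starProjection w‖ +
      ‖Kᗮ.starProjection v‖ * ‖Kᗮ.starProjection w‖ := by
  have split : ⟪v, w⟫_𝕜 = ⟪K.starProjection v, K.starProjection w⟫_𝕜 +
      ⟪Kᗮ.starProjection v, Kᗮ.starProjection w⟫_𝕜 := by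
    conv_lhs => rw [← K.starProjection_add_starProjection_orthogonal v,
      ← K.starProjection_add_starProjection_orthogonal w]
    have hK (x : E) : K.starProjection x ∈ K := K.starProjection_apply_mem x
    have hKperp (x : E) : Kᗮ.starProjection x ∈ Kᗮ := Kᗮ.starProjection_apply_mem x
    rw [inner_add_left, inner_add_right, inner_add_right,
      K.inner_right_of_mem_orthogonal (hK v) (hKperp w),
      K.inner_left_of_mem_orthogonal (hK w) (hKperp v)]
    ring
  rw [split]
  exact (norm_add_le _ _).trans (add_le_add (norm_inner_le_norm _ _) (norm_inner_le_norm _ _))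

theorem norm_starProjection_singleton (u v : E) :
    ‖(𝕜 ∙ u).starProjection v‖ = ‖⟪u, v⟫_𝕜‖ / ‖u‖ := by
  rcases eq_or_ne u 0 with rfl | hu
  · simp
  rw [Submodule.starProjection_singleton, norm_smul, norm_div, RCLike.norm_ofReal,
    abs_of_nonneg (by positivity)]
  field_simp [norm_ne_zero_iff.mpr hu]

theorem norm_starProjection_orthogonal_singleton (u v : E) :
    ‖(𝕜 ∙ u)ᗮ.starProjection v‖ = √(‖v‖ ^ 2 - ‖⟪u, v⟫_𝕜‖ ^ 2 / ‖u‖ ^ 2) := by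
  have pythagoras := Submodule.norm_sq_eq_add_norm_sq_starProjection v (𝕜 ∙ u)
  rw [norm_starProjection_singleton, div_pow] at pythagoras
  rw [← Real.sqrt_sq (norm_nonneg ((𝕜 ∙ u)ᗮ.starProjection v))]
  congr 1
  linarith

theorem norm_inner_le_via_span_singleton (u v w : E) :
    ‖⟪v, w⟫_𝕜‖ ≤ ‖⟪u, v⟫_𝕜‖ * ‖⟪u, w⟫_𝕜‖ / ‖u‖ ^ 2 +
      √(‖v‖ ^ 2 - ‖⟪u, v⟫_𝕜‖ ^ 2 / ‖u‖ ^ 2) * √(‖w‖ ^ 2 - ‖⟪u, w⟫_𝕜‖ ^ 2 / ‖u‖ ^ 2) := by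
  have h := (𝕜 ∙ u).norm_inner_le_starProjection_add_orthogonal v w
  rwa [norm_starProjection_singleton, norm_starProjection_singleton,
    norm_starProjection_orthogonal_singleton, norm_starProjection_orthogonal_singleton,
    div_mul_div_comm, ← sq] at h

theorem norm_inner_le_of_sq_norm_eq {u v w : E} {r : ℝ}
    (hu : ‖u‖ ^ 2 = r) (hv : ‖v‖ ^ 2 = r) (hw : ‖w‖ ^ 2 = r) :
    ‖⟪v, w⟫_𝕜‖ ≤ r * √(‖⟪u, v⟫_𝕜‖ ^ 2 / r ^ 2 * (‖⟪u, w⟫_𝕜‖ ^ 2 / r ^ 2)) +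
      r * √((1 - ‖⟪u, v⟫_𝕜‖ ^ 2 / r ^ 2) * (1 - ‖⟪u, w⟫_𝕜‖ ^ 2 / r ^ 2)) := by
  have hr : 0 ≤ r := hu ▸ by positivity
  have h := norm_inner_le_via_span_singleton (𝕜 := 𝕜) u v w
  rw [hu, hv, hw] at h
  set a := ‖⟪u, v⟫_𝕜‖
  set b := ‖⟪u, w⟫_𝕜‖
  have factor (x : ℝ) : r - x / r = r * (1 - x / r ^ 2) := by
    rcases hr.eq_or_lt with rfl | hr
    · simp
    · field_simp
  refine h.trans (add_le_add (le_of_eq ?_) ?_)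
  · rw [show a ^ 2 / r ^ 2 * (b ^ 2 / r ^ 2) = (a * b / r ^ 2) ^ 2 by ring,
      Real.sqrt_sq (by positivity)]
    rcases hr.eq_or_lt with rfl | hr
    · simp
    · field_simp
  · rw [factor, factor]
    exact Real.sqrt_mul_mul_sqrt_mul_le hr _ _

theorem le_sq_norm_sub_smul_of_norm_eq_one {c : 𝕜} (hc : ‖c‖ = 1) (v w : E) :
    ‖v‖ ^ 2 + ‖w‖ ^ 2 - 2 * ‖⟪v, w⟫_𝕜‖ ≤ ‖v - c • w‖ ^ 2 := by
  have hre : RCLike.re (c * ⟪v, w⟫_𝕜) ≤ ‖⟪v, w⟫_𝕜‖ := by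
    simpa [hc] using RCLike.re_le_norm (c * ⟪v, w⟫_𝕜)
  rw [@norm_sub_sq 𝕜, norm_smul, hc, one_mul, inner_smul_right]
  linarith

end InnerProductSpace

namespace Matrix

variable {𝕜 m n : Type*} [RCLike 𝕜]

def toL2 : Matrix m n 𝕜 →ₗ[𝕜] EuclideanSpace 𝕜 (m × n) where
  toFun A := WithLp.toLp 2 (Function.uncurry A)
  map_add' _ _ := rfl
  map_smul' _ _ := rfl

theorem inner_toL2 [Fintype m] [Fintype n] (A B : Matrix m n 𝕜) :
    ⟪toL2 A, toL2 B⟫_𝕜 = trace (Aᴴ * B) := by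
  simp only [toL2, PiLp.inner_apply, trace, diag, mul_apply,
    Fintype.sum_prod_type, RCLike.inner_apply, conjTranspose_apply, RCLike.star_def]
  rw [Finset.sum_comm]
  exact Finset.sum_congr rfl fun _ _ ↦ Finset.sum_congr rfl fun _ _ ↦ mul_comm _ _

theorem sq_norm_toL2_of_mem_unitaryGroup [Fintype n] [DecidableEq n] {U : Matrix n n 𝕜}
    (hU : U ∈ unitaryGroup n 𝕜) : ‖toL2 U‖ ^ 2 = Fintype.card n := by
  rw [← inner_self_eq_norm_sq (𝕜 := 𝕜), inner_toL2,
    ← star_eq_conjTranspose, (mem_unitaryGroup_iff'.mp hU), trace_one]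
  simp

end Matrix

theorem frobNorm_eq_norm_toL2 {d : ℕ} (X : Matrix (Fin d) (Fin d) ℂ) :
    frobNorm X = ‖toL2 X‖ := by
  rw [@norm_eq_sqrt_re_inner ℂ, Matrix.inner_toL2, frobNorm]
  rfl

theorem trace_bound_max_entangled_general {d : ℕ}
    (U V W : Matrix (Fin d) (Fin d) ℂ)
    (hU : U ∈ Matrix.unitaryGroup (Fin d) ℂ)
    (hV : V ∈ Matrix.unitaryGroup (Fin d) ℂ)
    (hW : W ∈ Matrix.unitaryGroup (Fin d) ℂ)
    (fV fW : ℝ)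
    (hfV : fV = ‖Matrix.trace (Uᴴ * V)‖ ^ 2 / (d : ℝ) ^ 2)
    (hfW : ‖Matrix.trace (Uᴴ * W)‖ ^ 2 / (d : ℝ) ^ 2 = fW) :
    ‖Matrix.trace (Vᴴ * W)‖ ≤
        (d : ℝ) * Real.sqrt (fV * fW) + (d : ℝ) * Real.sqrt ((1 - fV) * (1 - fW))
    ∧ ∀ ρ : ℝ, frobNorm (V - Complex.exp (ρ * Complex.I) • W) ≥
        Real.sqrt (2 * d * (1 - Real.sqrt (fV * fW) - Real.sqrt ((1 - fV) * (1 - fW)))) := by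
  have hnorm {X : Matrix (Fin d) (Fin d) ℂ} (hX : X ∈ unitaryGroup (Fin d) ℂ) :
      ‖toL2 X‖ ^ 2 = d := by
    rw [sq_norm_toL2_of_mem_unitaryGroup hX, Fintype.card_fin]
  have bound : ‖trace (Vᴴ * W)‖ ≤ d * √(fV * fW) + d * √((1 - fV) * (1 - fW)) := by
    subst hfV hfW
    simpa only [inner_toL2] using
      norm_inner_le_of_sq_norm_eq (𝕜 := ℂ) (hnorm hU) (hnorm hV) (hnorm hW)
  refine ⟨bound, fun ρ ↦ ?_⟩
  have hphase : ‖Complex.exp (ρ * Complex.I)‖ = 1 := Complex.norm_exp_ofReal_mul_I ρ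
  have hdist := le_sq_norm_sub_smul_of_norm_eq_one (𝕜 := ℂ) hphase (toL2 V) (toL2 W)
  rw [hnorm hV, hnorm hW, inner_toL2] at hdist
  rw [ge_iff_le, frobNorm_eq_norm_toL2, Real.sqrt_le_iff]
  refine ⟨norm_nonneg _, ?_⟩
  rw [map_sub, map_smul]
  linarith

theorem trace_bound_max_entangled {d : ℕ} (hd : 0 < d)
    (U V W : Matrix (Fin d) (Fin d) ℂ)
    (hU : U ∈ Matrix.unitaryGroup (Fin d) ℂ)
    (hV : V ∈ Matrix.unitaryGroup (Fin d) ℂ)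
    (hW : W ∈ Matrix.unitaryGroup (Fin d) ℂ)
    (fV fW : ℝ)
    (hfV : fV = ‖Matrix.trace (Uᴴ * V)‖ ^ 2 / (d : ℝ) ^ 2)
    (hfW0 : 0 ≤ fW) (hfW1 : fW ≤ 1)
    (hfW : ‖Matrix.trace (Uᴴ * W)‖ ^ 2 / (d : ℝ) ^ 2 = fW) :
    ‖Matrix.trace (Vᴴ * W)‖ ≤
        (d : ℝ) * Real.sqrt (fV * fW) + (d : ℝ) * Real.sqrt ((1 - fV) * (1 - fW))
    ∧ ∀ ρ : ℝ, frobNorm (V - Complex.exp (ρ * Complex.I) • W) ≥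
        Real.sqrt (2 * d * (1 - Real.sqrt (fV * fW) - Real.sqrt ((1 - fV) * (1 - fW)))) :=
  trace_bound_max_entangled_general U V W hU hV hW fV fW hfV hfW
end

section
/- For any d×d unitary matrix M and any index k, the sum of absolute values of the diagonal entries satisfies Σ_{j=1}^d |M_{jj}| − 2|M_{kk}| ≤ d − 2. -/
/-!
Multiplying the rows of `M` by unimodular scalars keeps it unitary and turns its diagonal into
`|M j j|` for `j ≠ k` and `-|M k k|` at `k`; so it suffices that a unitary `V` with `V k k = -a`,
`a ≥ 0`, has `Re tr V ≤ d - 2`, i.e. `∑ j, ‖e j - V e j‖² ≥ 4`. The term `j = k` is `2 + 2a`.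
For the others, `w = V e_k + a e_k` is orthogonal to `e_k`, has `‖w‖² = 1 - a²`, and
`Re ⟪w, V w⟫ = a Re (V²)_kk - a³ ≤ a (1 - a²)`, so `‖w - V w‖² ≥ 2 (1 - a) (1 - a²)`; by
Cauchy–Schwarz, `‖w - V w‖² ≤ (∑ j ≠ k, ‖e j - V e j‖²) ‖w‖²`, whence `∑ j ≠ k, … ≥ 2 (1 - a)`.
-/

open Matrix Complex Finset

section InnerProductSpace

variable {𝕜 H ι : Type*} [RCLike 𝕜] [NormedAddCommGroup H] [InnerProductSpace 𝕜 H]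

lemma LinearIsometry.norm_sub_map_sq (U : H →ₗᵢ[𝕜] H) (x : H) :
    ‖x - U x‖ ^ 2 = 2 * ‖x‖ ^ 2 - 2 * RCLike.re (inner 𝕜 x (U x)) := by
  rw [norm_sub_sq (𝕜 := 𝕜), U.norm_map]; ring

lemma OrthonormalBasis.norm_map_sq_le_sum_mul [Fintype ι] (b : OrthonormalBasis ι 𝕜 H)
    {F : Type*} [SeminormedAddCommGroup F] [NormedSpace 𝕜 F] (T : H →ₗ[𝕜] F) (s : Finset ι)
    {w : H} (hw : ∀ j ∉ s, inner 𝕜 (b j) w = 0) :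
    ‖T w‖ ^ 2 ≤ (∑ j ∈ s, ‖T (b j)‖ ^ 2) * ‖w‖ ^ 2 := by
  have hTw : T w = ∑ j ∈ s, inner 𝕜 (b j) w • T (b j) := by
    conv_lhs => rw [← b.sum_repr' w]
    rw [map_sum, ← sum_subset (subset_univ s) fun j _ hj => by rw [hw j hj, zero_smul, map_zero]]
    simp only [map_smul]
  calc ‖T w‖ ^ 2 ≤ (∑ j ∈ s, ‖T (b j)‖ * ‖inner 𝕜 (b j) w‖) ^ 2 := by
        rw [hTw]
        gcongr
        refine (norm_sum_le _ _).trans_eq (sum_congr rfl fun j _ => ?_)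
        rw [norm_smul, mul_comm]
    _ ≤ (∑ j ∈ s, ‖T (b j)‖ ^ 2) * ∑ j ∈ s, ‖inner 𝕜 (b j) w‖ ^ 2 :=
        sum_mul_sq_le_sq_mul_sq _ _ _
    _ ≤ (∑ j ∈ s, ‖T (b j)‖ ^ 2) * ‖w‖ ^ 2 := by
        gcongr
        exact b.orthonormal.sum_inner_products_le w

lemma LinearIsometry.exists_inner_eq_zero_norm_sub_map_sq_ge (U : H →ₗᵢ[𝕜] H) {e : H}
    (he : ‖e‖ = 1) {a : ℝ} (ha : 0 ≤ a) (hUe : inner 𝕜 e (U e) = -(a : 𝕜)) :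
    ∃ w : H, inner 𝕜 e w = 0 ∧ ‖w‖ ^ 2 = 1 - a ^ 2 ∧
      2 * (1 - a) * (1 - a ^ 2) ≤ ‖w - U w‖ ^ 2 := by
  set w := U e + (a : 𝕜) • e
  have hee : inner 𝕜 e e = (1 : 𝕜) := by simp [he]
  have heUe : inner 𝕜 (U e) e = -(a : 𝕜) := by rw [← inner_conj_symm, hUe]; simp
  have hw : ‖w‖ ^ 2 = 1 - a ^ 2 := by
    rw [norm_add_sq (𝕜 := 𝕜), U.norm_map, he, norm_smul, he, inner_smul_right, heUe]
    rw [RCLike.norm_ofReal, abs_of_nonneg ha, mul_neg, ← RCLike.ofReal_mul, map_neg,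
      RCLike.ofReal_re]
    ring
  have hUUe : ‖inner 𝕜 e (U (U e))‖ ≤ 1 := by
    simpa [he] using norm_inner_le_norm (𝕜 := 𝕜) e (U (U e))
  have hwUw : inner 𝕜 w (U w) = (a : 𝕜) * inner 𝕜 e (U (U e)) - (a : 𝕜) ^ 3 := by
    simp only [w, map_add, map_smul, inner_add_left, inner_add_right, inner_smul_left,
      inner_smul_right, U.inner_map_map, hUe, hee, RCLike.conj_ofReal]
    ring
  refine ⟨w, ?_, hw, ?_⟩
  · simp [w, inner_add_right, inner_smul_right, hUe, he]
  · have hre : RCLike.re (inner 𝕜 w (U w)) ≤ a * (1 - a ^ 2) := by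
      rw [hwUw]
      have := (RCLike.re_le_norm (inner 𝕜 e (U (U e)))).trans hUUe
      simp only [map_sub, RCLike.re_ofReal_mul, ← RCLike.ofReal_pow, RCLike.ofReal_re]
      nlinarith
    rw [U.norm_sub_map_sq, hw]
    nlinarith

lemma OrthonormalBasis.two_mul_one_sub_le_sum_erase_norm_sub_map_sq [Fintype ι] [DecidableEq ι]
    (b : OrthonormalBasis ι 𝕜 H) (U : H →ₗᵢ[𝕜] H) (k : ι) {a : ℝ} (ha : 0 ≤ a)
    (hk : inner 𝕜 (b k) (U (b k)) = -(a : 𝕜)) :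
    2 * (1 - a) ≤ ∑ j ∈ univ.erase k, ‖b j - U (b j)‖ ^ 2 := by
  rcases le_or_gt 1 a with h1a | ha1
  · exact (by linarith : 2 * (1 - a) ≤ 0).trans (sum_nonneg fun _ _ => sq_nonneg _)
  obtain ⟨w, hw0, hw, hUw⟩ :=
    U.exists_inner_eq_zero_norm_sub_map_sq_ge (b.orthonormal.1 k) ha hk
  have hbound := b.norm_map_sq_le_sum_mul (LinearMap.id - U.toLinearMap) (univ.erase k)
    (w := w) fun j hj => (by simpa using hj : j = k) ▸ hw0
  simp only [LinearMap.sub_apply, LinearMap.id_apply, LinearIsometry.coe_toLinearMap] at hbound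
  rw [hw] at hbound
  have hc : 0 < 1 - a ^ 2 := by nlinarith
  nlinarith

theorem OrthonormalBasis.sum_re_inner_map_le [Fintype ι] (b : OrthonormalBasis ι 𝕜 H)
    (U : H →ₗᵢ[𝕜] H) (k : ι) {a : ℝ} (ha : 0 ≤ a) (hk : inner 𝕜 (b k) (U (b k)) = -(a : 𝕜)) :
    ∑ j, RCLike.re (inner 𝕜 (b j) (U (b j))) ≤ Fintype.card ι - 2 := by
  classical
  have hre : ∀ j, RCLike.re (inner 𝕜 (b j) (U (b j))) = 1 - ‖b j - U (b j)‖ ^ 2 / 2 := by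
    intro j
    rw [U.norm_sub_map_sq, b.orthonormal.1 j]
    ring
  have hk' : ‖b k - U (b k)‖ ^ 2 = 2 + 2 * a := by
    rw [U.norm_sub_map_sq, b.orthonormal.1 k, hk]
    simp
  have hrest := b.two_mul_one_sub_le_sum_erase_norm_sub_map_sq U k ha hk
  rw [sum_congr rfl fun j _ => hre j, sum_sub_distrib, ← sum_div,
    ← add_sum_erase univ (fun j => ‖b j - U (b j)‖ ^ 2) (mem_univ k), hk']
  simp only [sum_const, card_univ, nsmul_eq_mul, mul_one]
  linarith

end InnerProductSpace

section Matrix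

variable {𝕜 n : Type*} [RCLike 𝕜] [Fintype n] [DecidableEq n]

theorem Matrix.sum_re_diag_le_of_mem_unitaryGroup {V : Matrix n n 𝕜}
    (hV : V ∈ unitaryGroup n 𝕜) (k : n) {a : ℝ} (ha : 0 ≤ a) (hk : V k k = -(a : 𝕜)) :
    ∑ j, RCLike.re (V j j) ≤ Fintype.card n - 2 := by
  let U := (Unitary.linearIsometryEquiv
    ⟨toEuclideanCLM (n := n) (𝕜 := 𝕜) V, Unitary.map_mem _ hV⟩).toLinearIsometry
  have hUV : ∀ i j, inner 𝕜 (EuclideanSpace.basisFun n 𝕜 i)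
      (U (EuclideanSpace.basisFun n 𝕜 j)) = V i j := by
    intro i j
    change inner 𝕜 _ (toEuclideanCLM (n := n) (𝕜 := 𝕜) V _) = _
    simp [EuclideanSpace.inner_single_left]
  simpa only [hUV] using
    (EuclideanSpace.basisFun n 𝕜).sum_re_inner_map_le U k ha (by rw [hUV, hk])

lemma RCLike.exists_norm_eq_one_mul_eq_norm (z : 𝕜) : ∃ u : 𝕜, ‖u‖ = 1 ∧ u * z = ‖z‖ := by
  rcases eq_or_ne z 0 with rfl | hz
  · exact ⟨1, by simp, by simp⟩
  · refine ⟨starRingEnd 𝕜 z / ‖z‖, by simp [hz], ?_⟩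
    rw [div_mul_eq_mul_div, RCLike.conj_mul]
    field_simp

lemma Matrix.diagonal_mem_unitaryGroup {ε : n → 𝕜} (hε : ∀ i, ‖ε i‖ = 1) :
    diagonal ε ∈ unitaryGroup n 𝕜 := by
  rw [mem_unitaryGroup_iff', star_eq_conjTranspose, diagonal_conjTranspose, diagonal_mul_diagonal,
    ← diagonal_one]
  congr 1
  funext i
  rw [Pi.star_apply, RCLike.star_def, RCLike.conj_mul, hε i]
  simp

lemma Matrix.exists_mem_unitaryGroup_diag_eq_signed_norm {M : Matrix n n 𝕜}
    (hM : M ∈ unitaryGroup n 𝕜) (k : n) :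
    ∃ V ∈ unitaryGroup n 𝕜, V k k = -(‖M k k‖ : 𝕜) ∧ ∀ j ≠ k, V j j = ‖M j j‖ := by
  choose u hu_norm hu using fun j => RCLike.exists_norm_eq_one_mul_eq_norm (M j j)
  refine ⟨diagonal (fun j => if j = k then -u j else u j) * M,
    mul_mem (diagonal_mem_unitaryGroup fun j => by split_ifs <;> simp [hu_norm]) hM, ?_,
    fun j hj => ?_⟩
  · simp [diagonal_mul, hu]
  · simp [diagonal_mul, hj, hu]

end Matrix

theorem tromborg_waldenstrom_diagonal_bound_general {d : ℕ}
    (M : Matrix (Fin d) (Fin d) ℂ)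
    (hM : M ∈ Matrix.unitaryGroup (Fin d) ℂ) (k : Fin d) :
    (∑ j, ‖M j j‖) - 2 * ‖M k k‖ ≤ (d : ℝ) - 2 := by
  obtain ⟨V, hV, hVk, hVj⟩ := exists_mem_unitaryGroup_diag_eq_signed_norm hM k
  have hre : ∀ j, (V j j).re = ‖M j j‖ - if j = k then 2 * ‖M k k‖ else 0 := by
    intro j
    by_cases hj : j = k
    · subst hj
      simp only [hVk, coe_algebraMap, neg_re, ofReal_re, ↓reduceIte]
      ring
    · simp [hVj j hj, hj]
  have hsum : ∑ j, (V j j).re = (∑ j, ‖M j j‖) - 2 * ‖M k k‖ := by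
    simp [hre, sum_sub_distrib]
  simpa [hsum] using sum_re_diag_le_of_mem_unitaryGroup hV k (norm_nonneg _) hVk

theorem tromborg_waldenstrom_diagonal_bound {d : ℕ} (hd : 2 ≤ d)
    (M : Matrix (Fin d) (Fin d) ℂ)
    (hM : M ∈ Matrix.unitaryGroup (Fin d) ℂ) (k : Fin d) :
    (∑ j, ‖M j j‖) - 2 * ‖M k k‖ ≤ (d : ℝ) - 2 :=
  tromborg_waldenstrom_diagonal_bound_general M hM k
end

section
/- For all x ∈ [0, π], the inequality sin(x) ≤ (4x/π)(1 − x/π) holds. -/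
/-! Writing `x = π / 2 + 2 s` with `|s| ≤ π / 4`, we have `sin x = cos (2 s) = 1 - 2 sin² s`, while
the parabola equals `1 - 16 s² / π²`. So the claim is `8 s² ≤ π² sin² s`, i.e. `sin |s|` lies above
the chord of `sin` from `0` to `π / 4` (whose slope is `2√2 / π`): this is concavity of `sin`
on `[0, π]`. -/

open Real

theorem div_mul_sin_le_sin {s a : ℝ} (hs : 0 ≤ s) (hsa : s ≤ a) (ha : a ≤ π) :
    s / a * sin a ≤ sin s := by
  obtain rfl | ha0 := (hs.trans hsa).eq_or_lt
  · simp [le_antisymm hsa hs]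
  have h := strictConcaveOn_sin_Icc.concaveOn.2 ⟨le_rfl, pi_pos.le⟩ ⟨ha0.le, ha⟩
    (sub_nonneg.2 ((div_le_one ha0).2 hsa)) (div_nonneg hs ha0.le) (sub_add_cancel 1 (s / a))
  simpa [div_mul_cancel₀ s ha0.ne'] using h

theorem eight_mul_sq_le_pi_sq_mul_sin_sq {s : ℝ} (hs : |s| ≤ π / 4) :
    8 * s ^ 2 ≤ π ^ 2 * sin s ^ 2 := by
  wlog hs0 : 0 ≤ s generalizing s
  · simpa using this (s := -s) (by rwa [abs_neg]) (by linarith)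
  have chord := div_mul_sin_le_sin hs0 ((le_abs_self s).trans hs) (by linarith [pi_pos])
  rw [sin_pi_div_four] at chord
  calc 8 * s ^ 2 = π ^ 2 * (s / (π / 4) * (√2 / 2)) ^ 2 := by
        field_simp
        rw [sq_sqrt zero_le_two]
        ring
    _ ≤ π ^ 2 * sin s ^ 2 := by gcongr

theorem sin_le_parabola (x : ℝ) (hx0 : 0 ≤ x) (hx1 : x ≤ Real.pi) :
    Real.sin x ≤ (4 * x / Real.pi) * (1 - x / Real.pi) := by
  obtain ⟨s, rfl⟩ : ∃ s, x = 2 * s + π / 2 := ⟨x / 2 - π / 4, by ring⟩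
  have hs : |s| ≤ π / 4 := abs_le.2 ⟨by linarith, by linarith⟩
  have hsin : sin (2 * s + π / 2) = 1 - 2 * sin s ^ 2 := by
    rw [sin_add_pi_div_two, cos_two_mul_eq_one_sub]
  have hparabola : 4 * (2 * s + π / 2) / π * (1 - (2 * s + π / 2) / π) =
      1 - 2 * (8 * s ^ 2 / π ^ 2) := by
    field_simp
    ring
  rw [hsin, hparabola, sub_le_sub_iff_left]
  gcongr
  rw [div_le_iff₀ (by positivity), mul_comm (sin s ^ 2)]
  exact eight_mul_sq_le_pi_sq_mul_sin_sq hs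
end

section
/- Let d ≥ 1 and 0 < R ≤ 2 with R ≤ √(2d). Setting β_sep = arccos(1 − R²/4) and β_ent = arccos(1 − R²/(2d)), it holds that sin(β_sep) ≥ (√d/2)·sin(β_ent). -/
open Real

lemma sqrt_mul_sin_arccos_one_sub_div {c : ℝ} (hc : 0 < c) (a : ℝ) :
    √c * sin (arccos (1 - a / (2 * c))) = √(a * (1 - a / (4 * c))) := by
  rw [sin_arccos, ← sqrt_mul hc.le]
  congr 1
  field_simp
  ring

theorem sin_beta_sep_ge_sqrt_d_sin_beta_ent_general (d R : ℝ) (hd : 1 ≤ d)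
    (hR0 : 0 < R) (hR2 : R ≤ 2) :
    Real.sin (Real.arccos (1 - R ^ 2 / 4)) ≥
      (Real.sqrt d / 2) * Real.sin (Real.arccos (1 - R ^ 2 / (2 * d))) := by
  have hd0 : 0 < d := by linarith
  have hsep := sqrt_mul_sin_arccos_one_sub_div two_pos (R ^ 2)
  have hent := sqrt_mul_sin_arccos_one_sub_div hd0 (R ^ 2)
  rw [show (2 : ℝ) * 2 = 4 by norm_num] at hsep
  have hRsq : R ^ 2 ≤ 4 := by nlinarith
  have hradicand : R ^ 2 * (1 - R ^ 2 / (4 * d)) ≤ 2 * (R ^ 2 * (1 - R ^ 2 / (4 * 2))) := by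
    have : 0 ≤ R ^ 2 * (R ^ 2 / (4 * d)) := by positivity
    nlinarith
  calc √d / 2 * sin (arccos (1 - R ^ 2 / (2 * d)))
      = √(R ^ 2 * (1 - R ^ 2 / (4 * d))) / 2 := by rw [← hent]; ring
    _ ≤ √(2 * (R ^ 2 * (1 - R ^ 2 / (4 * 2)))) / 2 := by gcongr
    _ = sin (arccos (1 - R ^ 2 / 4)) := by
      rw [sqrt_mul zero_le_two, ← hsep, ← mul_assoc, mul_self_sqrt zero_le_two]
      ring

theorem sin_beta_sep_ge_sqrt_d_sin_beta_ent (d R : ℝ) (hd : 1 ≤ d)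
    (hR0 : 0 < R) (hR2 : R ≤ 2) (hRd : R ≤ Real.sqrt (2 * d)) :
    Real.sin (Real.arccos (1 - R ^ 2 / 4)) ≥
      (Real.sqrt d / 2) * Real.sin (Real.arccos (1 - R ^ 2 / (2 * d))) :=
  sin_beta_sep_ge_sqrt_d_sin_beta_ent_general d R hd hR0 hR2
end

section
/- Let γ ∈ [0, π/2], d ≥ 2, and 0 < R ≤ √(4(1 − cos γ)). Define β_sep = arccos(1 − R²/4) and β_ent = arccos(1 − R²/(2d)). Then the ratio (sin(2γ − β_ent)·sin(β_ent)) / (sin(2γ − β_sep)·sin(β_sep)) is at most 8/√d. -/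
/-!
Write `s = R²/4`, so that `cos βsep = 1 - s` and `cos βent = 1 - (2/d) s`. Since
`sin (arccos (1 - t))² = t (2 - t)`, we get `sin βsep ≥ √s` and `sin βent ≤ (2/√d) √s`.
The hypothesis on `R` says `βsep ≤ γ`, so `2γ - βsep ∈ [βsep, π - βsep]` and hence
`sin βsep ≤ sin (2γ - βsep)`; writing `2γ - βent = (2γ - βsep) + (βsep - βent)` then gives
`sin (2γ - βent) ≤ 2 sin (2γ - βsep)`. Together the ratio is at most `4/√d`.
-/

open Real

namespace Real

lemma sin_add_le_sin_add_sin {x y : ℝ} (hx : 0 ≤ sin x) (hy : 0 ≤ sin y) :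
    sin (x + y) ≤ sin x + sin y := by
  rw [sin_add]
  nlinarith [cos_le_one x, cos_le_one y]

lemma sin_le_sin_of_le_of_le_pi_sub {x y : ℝ} (hx : 0 ≤ x) (hxy : x ≤ y) (hy : y ≤ π - x) :
    sin x ≤ sin y := by
  rcases le_total y (π / 2) with h | h
  · exact sin_le_sin_of_le_of_le_pi_div_two (by linarith) h hxy
  · rw [← sin_pi_sub y]
    exact sin_le_sin_of_le_of_le_pi_div_two (by linarith) (by linarith) (by linarith)

lemma sqrt_le_sin_arccos_one_sub {t : ℝ} (h0 : 0 ≤ t) (h1 : t ≤ 1) :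
    √t ≤ sin (arccos (1 - t)) := by
  rw [sin_arccos]
  exact sqrt_le_sqrt (by nlinarith)

lemma sin_arccos_one_sub_le (t : ℝ) : sin (arccos (1 - t)) ≤ √(2 * t) := by
  rw [sin_arccos]
  exact sqrt_le_sqrt (by nlinarith [sq_nonneg t])

lemma sin_arccos_one_sub_mul_le {c t : ℝ} (hc : 0 ≤ c) (ht0 : 0 ≤ t) (ht1 : t ≤ 1) :
    sin (arccos (1 - c * t)) ≤ √(2 * c) * sin (arccos (1 - t)) :=
  calc sin (arccos (1 - c * t)) ≤ √(2 * (c * t)) := sin_arccos_one_sub_le _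
    _ = √(2 * c) * √t := by rw [← mul_assoc, sqrt_mul (by positivity)]
    _ ≤ √(2 * c) * sin (arccos (1 - t)) := by
      gcongr
      exact sqrt_le_sin_arccos_one_sub ht0 ht1

lemma arccos_one_sub_le {s γ : ℝ} (hγ0 : 0 ≤ γ) (hγπ : γ ≤ π) (h : s ≤ 1 - cos γ) :
    arccos (1 - s) ≤ γ := by
  rw [← arccos_cos hγ0 hγπ]
  exact arccos_le_arccos (by linarith)

end Real

lemma sin_two_mul_sub_le_two_mul_sin {γ β β' : ℝ} (hβ'0 : 0 ≤ β') (hβ'β : β' ≤ β)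
    (hβγ : β ≤ γ) (hγ : γ ≤ π / 2) :
    sin (2 * γ - β') ≤ 2 * sin (2 * γ - β) := by
  have hβ_le : sin β ≤ sin (2 * γ - β) :=
    sin_le_sin_of_le_of_le_pi_sub (by linarith) (by linarith) (by linarith)
  have hδ_le : sin (β - β') ≤ sin β :=
    sin_le_sin_of_le_of_le_pi_div_two (by linarith) (by linarith) (by linarith)
  have hδ_nonneg : 0 ≤ sin (β - β') := sin_nonneg_of_nonneg_of_le_pi (by linarith) (by linarith)
  have hA_nonneg : 0 ≤ sin (2 * γ - β) := sin_nonneg_of_nonneg_of_le_pi (by linarith) (by linarith)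
  calc sin (2 * γ - β') = sin ((2 * γ - β) + (β - β')) := by ring_nf
    _ ≤ sin (2 * γ - β) + sin (β - β') := sin_add_le_sin_add_sin hA_nonneg hδ_nonneg
    _ ≤ 2 * sin (2 * γ - β) := by linarith

theorem improvement_ratio_bound (γ d R : ℝ)
    (hγ0 : 0 ≤ γ) (hγ1 : γ ≤ Real.pi / 2) (hd : 2 ≤ d)
    (hR0 : 0 < R) (hR : R ≤ Real.sqrt (4 * (1 - Real.cos γ)))
    (βsep βent : ℝ)
    (hs : βsep = Real.arccos (1 - R ^ 2 / 4))
    (he : βent = Real.arccos (1 - R ^ 2 / (2 * d))) :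
    (Real.sin (2 * γ - βent) * Real.sin βent) /
      (Real.sin (2 * γ - βsep) * Real.sin βsep) ≤ 8 / Real.sqrt d := by
  set s := R ^ 2 / 4
  have hd0 : 0 < d := by linarith
  have hs0 : 0 < s := by positivity
  have hsγ : s ≤ 1 - cos γ := by
    change R ^ 2 / 4 ≤ _
    linarith [(le_sqrt' hR0).1 hR]
  have hs1 : s ≤ 1 := by linarith [cos_nonneg_of_mem_Icc ⟨by linarith, hγ1⟩]
  have he' : βent = arccos (1 - 2 / d * s) := by rw [he]; congr 1; ring
  have hsep_pos : 0 < βsep := hs ▸ arccos_pos.2 (by linarith)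
  have hsep_le : βsep ≤ γ := hs ▸ arccos_one_sub_le hγ0 (by linarith) hsγ
  have hent_nonneg : 0 ≤ βent := he' ▸ arccos_nonneg _
  have hent_le : βent ≤ βsep := by
    rw [he', hs]
    exact arccos_le_arccos (by nlinarith [div_le_one_of_le₀ hd hd0.le])
  have hA_pos : 0 < sin (2 * γ - βsep) := sin_pos_of_pos_of_lt_pi (by linarith) (by linarith)
  have hsep_sin_pos : 0 < sin βsep := sin_pos_of_pos_of_lt_pi hsep_pos (by linarith)
  have hnum : sin (2 * γ - βent) ≤ 2 * sin (2 * γ - βsep) :=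
    sin_two_mul_sub_le_two_mul_sin hent_nonneg hent_le hsep_le hγ1
  have hent : sin βent ≤ 2 / √d * sin βsep := by
    have hc : √(2 * (2 / d)) = 2 / √d := by
      rw [← mul_div_assoc, sqrt_div' _ hd0.le, show (2 * 2 : ℝ) = 2 ^ 2 by norm_num,
        sqrt_sq zero_le_two]
    rw [he', hs, ← hc]
    exact sin_arccos_one_sub_mul_le (by positivity) hs0.le hs1
  rw [div_le_iff₀ (by positivity)]
  calc sin (2 * γ - βent) * sin βent
      ≤ (2 * sin (2 * γ - βsep)) * (2 / √d * sin βsep) :=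
        mul_le_mul hnum hent (sin_nonneg_of_nonneg_of_le_pi hent_nonneg (by linarith))
          (by positivity)
    _ = 4 / √d * (sin (2 * γ - βsep) * sin βsep) := by ring
    _ ≤ 8 / √d * (sin (2 * γ - βsep) * sin βsep) := by gcongr; norm_num
end
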